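/- Lebesgue measure λ restricted to [0,1] does not have the ∞-Boman covering property for any constant C > 0: for the closed balls (intervals) B^cl(x_n, r_n) = [2^{-n}, 2^{-n+1}] (so x_n = 3·2^{-n-1}, r_n = 2^{-n-1}), weights w_n = 2^{-n}, and dilations t_n = 3, the ratio ‖ Σ_{n=1}^N w_n · 1_{B^cl(x_n, 3 r_n)} / λ(B^cl(x_n, 3 r_n)) ‖_{L^∞(λ)} / ‖ Σ_{n=1}^N w_n · 1_{B^cl(x_n, r_n)} / λ(B^cl(x_n, r_n)) ‖_{L^∞(λ)} tends to infinity as N → ∞; in particular ‖ Σ_{n=1}^N w_n · 1_{B^cl(x_n, r_n)} / λ(B^cl(x_n, r_n)) ‖_{L^∞(λ)} = 1 while ‖ Σ_{n=1}^N w_n · 1_{B^cl(x_n, 3 r_n)} / λ(B^cl(x_n, 3 r_n)) ‖_{L^∞(λ)} grows linearly in N. -/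

import Mathlib

open MeasureTheory Metric ENNReal Set Filter

noncomputable section

/-- Lebesgue measure restricted to `[0,1]`. -/
def lam : Measure ℝ := volume.restrict (Icc (0 : ℝ) 1)

/-- `Σ_{n=1}^N w_n 1_{B^cl(x_n, t·r_n)} / λ(B^cl(x_n, t·r_n))` for the balls
`B^cl(x_n, r_n) = [2^{-n}, 2^{-n+1}]` (so `x_n = 3·2^{-n-1}`, `r_n = 2^{-n-1}`), weights
`w_n = 2^{-n}`, and a common dilation factor `t`. -/
def bomanSum (N : ℕ) (t : ℝ) (y : ℝ) : ℝ≥0∞ :=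
  ∑ n ∈ Finset.Icc 1 N,
    (closedBall (3 * 2 ^ (-(n : ℤ) - 1)) (t * 2 ^ (-(n : ℤ) - 1))).indicator
      (fun _ => ENNReal.ofReal ((2 : ℝ) ^ (-(n : ℤ))) /
        lam (closedBall ((3 : ℝ) * 2 ^ (-(n : ℤ) - 1)) (t * 2 ^ (-(n : ℤ) - 1)))) y

/-! The undilated balls `[2^{-n}, 2^{-n+1}]` each carry density `1` and overlap only at their
endpoints, so the undilated sum is at most `1` off a countable set and equals `1` on `[1/2, 1]`.
Dilating by `3` turns the `n`-th ball into `[0, 3·2^{-n}]`, whose `λ`-measure is between `2^{-n}`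
and `3·2^{-n}`, so each dilated summand has density between `1/3` and `1`; all `N` dilated balls
contain `[0, 2^{-N}]`, where the dilated sum is therefore at least `N/3`. -/

lemma le_essSup_of_forall_mem_le {α β : Type*} [MeasurableSpace α] [CompleteLinearOrder β]
    {μ : Measure α} {f : α → β} {s : Set α} {c : β} (hs : μ s ≠ 0) (h : ∀ x ∈ s, c ≤ f x) :
    c ≤ essSup f μ := by
  by_contra! hlt
  refine hs (measure_eq_zero_iff_ae_notMem.2 ?_)
  filter_upwards [ae_lt_of_essSup_lt hlt] with x hx hxs
  exact (h x hxs).not_gt hx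

lemma sum_indicator_one_le_one {ι α : Type*} {s : Finset ι} {A : ι → Set α} {x : α}
    (h : ∀ i ∈ s, ∀ j ∈ s, x ∈ A i → x ∈ A j → i = j) :
    ∑ i ∈ s, (A i).indicator (1 : α → ℝ≥0∞) x ≤ 1 := by
  classical
  simp only [indicator_apply, Pi.one_apply, Finset.sum_boole, Nat.cast_le_one]
  refine Finset.card_le_one.2 fun i hi j hj => ?_
  rw [Finset.mem_filter] at hi hj
  exact h i hi.1 j hj.1 hi.2 hj.2

lemma lam_Icc {a b : ℝ} (ha : 0 ≤ a) (hb : b ≤ 1) : lam (Icc a b) = ENNReal.ofReal (b - a) := by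
  rw [lam, Measure.restrict_apply measurableSet_Icc, inter_eq_left.2 (Icc_subset_Icc ha hb),
    Real.volume_Icc]

lemma lam_Icc_ne_zero {a b : ℝ} (ha : 0 ≤ a) (hab : a < b) (hb : b ≤ 1) : lam (Icc a b) ≠ 0 := by
  simpa [lam_Icc ha hb] using hab

lemma closedBall_three_mul_one_mul (r : ℝ) : closedBall (3 * r) (1 * r) = Icc (2 * r) (4 * r) := by
  rw [Real.closedBall_eq_Icc]
  congr 1 <;> ring

lemma closedBall_three_mul_three_mul (r : ℝ) : closedBall (3 * r) (3 * r) = Icc 0 (6 * r) := by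
  rw [Real.closedBall_eq_Icc]
  congr 1 <;> ring

def dyadicTerm (t r : ℝ) : ℝ → ℝ≥0∞ :=
  (closedBall (3 * r) (t * r)).indicator fun _ =>
    ENNReal.ofReal (2 * r) / lam (closedBall (3 * r) (t * r))

lemma dyadicTerm_one {r : ℝ} (hr : 0 < r) (hr1 : 4 * r ≤ 1) :
    dyadicTerm 1 r = (Icc (2 * r) (4 * r)).indicator 1 := by
  have hval : ENNReal.ofReal (2 * r) / lam (Icc (2 * r) (4 * r)) = 1 := by
    rw [lam_Icc (by positivity) hr1, show 4 * r - 2 * r = 2 * r by ring]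
    exact ENNReal.div_self (by simpa using hr) ENNReal.ofReal_ne_top
  rw [dyadicTerm, closedBall_three_mul_one_mul, hval]
  rfl

lemma dyadicTerm_three_le_one {r : ℝ} (hr : 0 ≤ r) (hr1 : 2 * r ≤ 1) (y : ℝ) :
    dyadicTerm 3 r y ≤ 1 := by
  refine indicator_apply_le' (fun _ => ENNReal.div_le_of_le_mul ?_) fun _ => zero_le
  calc ENNReal.ofReal (2 * r) = lam (Icc 0 (2 * r)) := by rw [lam_Icc le_rfl hr1, sub_zero]
    _ ≤ lam (Icc 0 (6 * r)) := measure_mono (Icc_subset_Icc_right (by linarith))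
    _ = 1 * lam (closedBall (3 * r) (3 * r)) := by rw [one_mul, closedBall_three_mul_three_mul]

lemma inv_three_le_dyadicTerm_three {r : ℝ} (hr : 0 < r) {y : ℝ} (hy : y ∈ Icc 0 (6 * r)) :
    3⁻¹ ≤ dyadicTerm 3 r y := by
  rw [dyadicTerm, closedBall_three_mul_three_mul, indicator_of_mem hy]
  calc (3⁻¹ : ℝ≥0∞) = ENNReal.ofReal (2 * r) / ENNReal.ofReal (6 * r) := by
        have hratio : 2 * r / (6 * r) = 3⁻¹ := by field_simp; norm_num
        rw [← ENNReal.ofReal_div_of_pos (by positivity), hratio,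
          ENNReal.ofReal_inv_of_pos three_pos, ENNReal.ofReal_ofNat]
    _ ≤ ENNReal.ofReal (2 * r) / lam (Icc 0 (6 * r)) := by
        refine ENNReal.div_le_div_left ?_ _
        calc lam (Icc 0 (6 * r)) ≤ volume (Icc (0 : ℝ) (6 * r)) := Measure.restrict_apply_le _ _
          _ = ENNReal.ofReal (6 * r) := by rw [Real.volume_Icc, sub_zero]

def dyadicRadius (n : ℕ) : ℝ := 2 ^ (-(n : ℤ) - 1)

lemma dyadicRadius_pos (n : ℕ) : 0 < dyadicRadius n := by
  unfold dyadicRadius; positivity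

lemma two_mul_dyadicRadius (n : ℕ) : 2 * dyadicRadius n = 2 ^ (-(n : ℤ)) := by
  rw [dyadicRadius, mul_comm, ← zpow_add_one₀ two_ne_zero, sub_add_cancel]

lemma four_mul_dyadicRadius (n : ℕ) : 4 * dyadicRadius n = 2 ^ (-(n : ℤ) + 1) := by
  rw [show (4 : ℝ) = 2 * 2 by norm_num, mul_assoc, two_mul_dyadicRadius, mul_comm,
    zpow_add_one₀ two_ne_zero]

lemma four_mul_dyadicRadius_le_two_mul {m n : ℕ} (h : m < n) :
    4 * dyadicRadius n ≤ 2 * dyadicRadius m := by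
  rw [four_mul_dyadicRadius, two_mul_dyadicRadius]
  exact zpow_le_zpow_right₀ one_le_two (by omega)

lemma two_mul_dyadicRadius_le_one (n : ℕ) : 2 * dyadicRadius n ≤ 1 := by
  rw [two_mul_dyadicRadius]
  exact zpow_le_one_of_nonpos₀ one_le_two (by omega)

lemma four_mul_dyadicRadius_le_one {n : ℕ} (hn : 1 ≤ n) : 4 * dyadicRadius n ≤ 1 :=
  (four_mul_dyadicRadius_le_two_mul hn).trans (two_mul_dyadicRadius_le_one 0)

lemma dyadicRadius_antitone : Antitone dyadicRadius := fun _ _ h =>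
  zpow_le_zpow_right₀ one_le_two (by omega)

lemma bomanSum_eq_sum_dyadicTerm (N : ℕ) (t y : ℝ) :
    bomanSum N t y = ∑ n ∈ Finset.Icc 1 N, dyadicTerm t (dyadicRadius n) y := by
  refine Finset.sum_congr rfl fun n _ => ?_
  rw [dyadicTerm, two_mul_dyadicRadius]
  rfl

lemma eq_of_mem_Icc_dyadicRadius {m n : ℕ} (h : m < n) {y : ℝ}
    (hm : y ∈ Icc (2 * dyadicRadius m) (4 * dyadicRadius m))
    (hn : y ∈ Icc (2 * dyadicRadius n) (4 * dyadicRadius n)) : y = 2 * dyadicRadius m :=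
  le_antisymm (hn.2.trans (four_mul_dyadicRadius_le_two_mul h)) hm.1

lemma bomanSum_one_le_one (N : ℕ) {y : ℝ} (hy : ∀ n, y ≠ 2 * dyadicRadius n) :
    bomanSum N 1 y ≤ 1 := by
  rw [bomanSum_eq_sum_dyadicTerm, Finset.sum_congr rfl fun n hn => by
    rw [dyadicTerm_one (dyadicRadius_pos n)
      (four_mul_dyadicRadius_le_one (Finset.mem_Icc.1 hn).1)]]
  refine sum_indicator_one_le_one fun m _ n _ hm hn => ?_
  rcases lt_trichotomy m n with h | h | h
  · exact absurd (eq_of_mem_Icc_dyadicRadius h hm hn) (hy m)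
  · exact h
  · exact absurd (eq_of_mem_Icc_dyadicRadius h hn hm) (hy n)

lemma one_le_bomanSum_one {N : ℕ} (hN : 1 ≤ N) {y : ℝ}
    (hy : y ∈ Icc (2 * dyadicRadius 1) (4 * dyadicRadius 1)) : 1 ≤ bomanSum N 1 y := by
  rw [bomanSum_eq_sum_dyadicTerm]
  calc 1 = dyadicTerm 1 (dyadicRadius 1) y := by
        rw [dyadicTerm_one (dyadicRadius_pos 1) (four_mul_dyadicRadius_le_one le_rfl),
          indicator_of_mem hy, Pi.one_apply]
    _ ≤ _ := Finset.single_le_sum (f := fun n => dyadicTerm 1 (dyadicRadius n) y)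
        (fun _ _ => zero_le) (Finset.mem_Icc.2 ⟨le_rfl, hN⟩)

lemma div_three_le_bomanSum_three (N : ℕ) {y : ℝ} (hy : y ∈ Icc 0 (2 * dyadicRadius N)) :
    (N : ℝ≥0∞) / 3 ≤ bomanSum N 3 y := by
  rw [bomanSum_eq_sum_dyadicTerm]
  calc (N : ℝ≥0∞) / 3 = (Finset.Icc 1 N).card • (3⁻¹ : ℝ≥0∞) := by
        rw [Nat.card_Icc, Nat.add_sub_cancel, nsmul_eq_mul, div_eq_mul_inv]
    _ ≤ _ := Finset.card_nsmul_le_sum _ _ _ fun n hn =>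
        inv_three_le_dyadicTerm_three (dyadicRadius_pos n) ⟨hy.1, hy.2.trans (by
          nlinarith [dyadicRadius_antitone (Finset.mem_Icc.1 hn).2, dyadicRadius_pos n])⟩

lemma bomanSum_three_le (N : ℕ) (y : ℝ) : bomanSum N 3 y ≤ N := by
  rw [bomanSum_eq_sum_dyadicTerm]
  calc _ ≤ (Finset.Icc 1 N).card • (1 : ℝ≥0∞) := Finset.sum_le_card_nsmul _ _ _ fun n _ =>
        dyadicTerm_three_le_one (dyadicRadius_pos n).le (two_mul_dyadicRadius_le_one n) y
    _ = N := by rw [Nat.card_Icc, Nat.add_sub_cancel, nsmul_one]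

lemma essSup_bomanSum_one {N : ℕ} (hN : 1 ≤ N) : essSup (bomanSum N 1) lam = 1 := by
  have hnot_endpoint : ∀ᵐ y ∂lam, ∀ n, y ≠ 2 * dyadicRadius n := by
    filter_upwards [ae_restrict_of_ae ((countable_range fun n => 2 * dyadicRadius n).ae_notMem
      volume)] with y hy n hyn
    exact hy ⟨n, hyn.symm⟩
  refine le_antisymm (essSup_le_of_ae_le _ ?_) (le_essSup_of_forall_mem_le ?_ fun y hy =>
    one_le_bomanSum_one hN hy)
  · filter_upwards [hnot_endpoint] with y hy using bomanSum_one_le_one N hy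
  · exact lam_Icc_ne_zero (by linarith [dyadicRadius_pos 1]) (by linarith [dyadicRadius_pos 1])
      (four_mul_dyadicRadius_le_one le_rfl)

lemma div_three_le_essSup_bomanSum_three (N : ℕ) : (N : ℝ≥0∞) / 3 ≤ essSup (bomanSum N 3) lam :=
  le_essSup_of_forall_mem_le (lam_Icc_ne_zero le_rfl (by linarith [dyadicRadius_pos N])
    (two_mul_dyadicRadius_le_one N)) fun _ => div_three_le_bomanSum_three N

/-- **Failure of the `∞`-Boman covering property for Lebesgue measure on `[0,1]`.**
For the intervals `B^cl(x_n, r_n) = [2^{-n}, 2^{-n+1}]`, weights `w_n = 2^{-n}`, and dilations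
`t_n = 3`, the undilated sums have `L^∞` norm `1`, while the dilated sums have `L^∞` norm
growing linearly in `N` (between `N/3` and `N`); in particular the ratio of the two norms tends
to infinity with `N`, so no constant `C` can realize the `∞`-Boman covering property. -/
theorem infty_boman_fails :
    (∀ N : ℕ, 1 ≤ N → essSup (bomanSum N 1) lam = 1) ∧
    (∀ N : ℕ, ENNReal.ofReal ((N : ℝ) / 3) ≤ essSup (bomanSum N 3) lam) ∧
    (∀ N : ℕ, essSup (bomanSum N 3) lam ≤ (N : ℝ≥0∞)) ∧
    Tendsto (fun N : ℕ => essSup (bomanSum N 3) lam / essSup (bomanSum N 1) lam)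
      atTop (nhds ⊤) := by
  have hofReal (N : ℕ) : ENNReal.ofReal ((N : ℝ) / 3) = (N : ℝ≥0∞) / 3 := by
    rw [ENNReal.ofReal_div_of_pos three_pos, ENNReal.ofReal_natCast, ENNReal.ofReal_ofNat]
  refine ⟨fun N => essSup_bomanSum_one, fun N => (hofReal N).trans_le
    (div_three_le_essSup_bomanSum_three N), fun N => essSup_le_of_ae_le _
    (.of_forall (bomanSum_three_le N)), ?_⟩
  refine tendsto_nhds_top_mono (ENNReal.tendsto_ofReal_atTop.comp
    (tendsto_natCast_atTop_atTop.atTop_div_const three_pos)) ?_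
  filter_upwards [eventually_ge_atTop 1] with N hN
  rw [essSup_bomanSum_one hN, div_one, Function.comp_apply, hofReal]
  exact div_three_le_essSup_bomanSum_three N

end
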